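/- Let R be a reduced ring and let M_R be an (σ,δ)-compatible module satisfying condition (*). Then M_R is (σ,δ)-skew McCoy. -/

import Mathlib

/-
Let `b` be the leading coefficient of `g(x)` (in degree `p`) and `q` the degree of `m(x)`.
By `(*)`, `m(x) r g(x) = 0` for every `r ∈ R`. Reading off the coefficient of `x^{j+p}`
and using compatibility, which makes `m_j a = 0` imply `m_j f_i^j(a) = 0` and
`m_j σ^j(a) = 0 ⇔ m_j a = 0`, one gets by downward induction on `j` that
`m_j R b^{q+1-j} = 0`. Hence `a = b^{q+1}` annihilates every coefficient of `m(x)`, so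
`m(x) a = 0`, and `a ≠ 0` because `R` is reduced.
-/

open MulOpposite

/-- `fw σ δ i j` is `f_i^j`, the sum of all words in `σ`, `δ` built with `i` factors of `σ`
and `j - i` factors of `δ`. -/
def fw {R : Type*} [Ring R] (σ δ : R → R) : ℕ → ℕ → R → R
  | 0, 0 => id
  | _ + 1, 0 => fun _ => 0
  | 0, j + 1 => fun a => δ (fw σ δ 0 j a)
  | i + 1, j + 1 => fun a => σ (fw σ δ i j a) + δ (fw σ δ (i + 1) j a)

/-- Multiplication of the Ore extension `R[x;σ,δ]`, on coefficient sequences. -/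
noncomputable def skewMul {R : Type*} [Ring R] (σ δ : R → R) (p q : ℕ →₀ R) : ℕ →₀ R :=
  p.sum fun j a => q.sum fun l b =>
    ∑ i ∈ Finset.range (j + 1), Finsupp.single (i + l) (a * fw σ δ i j b)

/-- The action of `R[x;σ,δ]` on the skew polynomial module `M[x;σ,δ]`, where `M` is a
right `R`-module (a module over `Rᵐᵒᵖ`): `(m x^j)·(b x^l) = Σ_{i≤j} (m·f_i^j(b)) x^{i+l}`. -/
noncomputable def skewSMul {R : Type*} [Ring R] (σ δ : R → R) {M : Type*} [AddCommGroup M]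
    [Module Rᵐᵒᵖ M] (m : ℕ →₀ M) (q : ℕ →₀ R) : ℕ →₀ M :=
  m.sum fun j mm => q.sum fun l b =>
    ∑ i ∈ Finset.range (j + 1), Finsupp.single (i + l) (op (fw σ δ i j b) • mm)

/-- A right `R`-module `M` is `(σ,δ)`-skew McCoy if whenever `m(x) g(x) = 0` in `M[x;σ,δ]`
with `g(x) ≠ 0`, there is a nonzero `a ∈ R` with `m(x) a = 0`. -/
def IsSkewMcCoy {R : Type*} [Ring R] (σ δ : R → R) (M : Type*) [AddCommGroup M]
    [Module Rᵐᵒᵖ M] : Prop :=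
  ∀ (m : ℕ →₀ M) (g : ℕ →₀ R), g ≠ 0 → skewSMul σ δ m g = 0 →
    ∃ a : R, a ≠ 0 ∧ skewSMul σ δ m (Finsupp.single 0 a) = 0

/-- A right `R`-module `M` is `(σ,δ)`-skew Armendariz if `m(x) g(x) = 0` implies
`(m_i x^i)(b_j x^j) = 0` for all `i, j`. -/
def IsSkewArmendariz {R : Type*} [Ring R] (σ δ : R → R) (M : Type*) [AddCommGroup M]
    [Module Rᵐᵒᵖ M] : Prop :=
  ∀ (m : ℕ →₀ M) (g : ℕ →₀ R), skewSMul σ δ m g = 0 →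
    ∀ i j, skewSMul σ δ (Finsupp.single i (m i)) (Finsupp.single j (g j)) = 0

/-- `σ`-compatibility of a right module: `m a = 0 ↔ m σ(a) = 0`. -/
def SigmaCompatible {R : Type*} [Ring R] (σ : R → R) (M : Type*) [AddCommGroup M]
    [Module Rᵐᵒᵖ M] : Prop :=
  ∀ (m : M) (a : R), op a • m = 0 ↔ op (σ a) • m = 0

/-- `δ`-compatibility of a right module: `m a = 0 → m δ(a) = 0`. -/
def DeltaCompatible {R : Type*} [Ring R] (δ : R → R) (M : Type*) [AddCommGroup M]
    [Module Rᵐᵒᵖ M] : Prop :=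
  ∀ (m : M) (a : R), op a • m = 0 → op (δ a) • m = 0

/-- A right module `M` is reduced if `m a = 0` implies `mR ∩ Ma = 0`. -/
def IsReducedModule {R : Type*} [Ring R] (M : Type*) [AddCommGroup M]
    [Module Rᵐᵒᵖ M] : Prop :=
  ∀ (m : M) (a : R), op a • m = 0 →
    ∀ x : M, (∃ r : R, op r • m = x) → (∃ m' : M, op a • m' = x) → x = 0

/-- Condition `(*)`: `m(x) f(x) = 0` implies `m(x) R f(x) = 0`. -/
def StarCondition {R : Type*} [Ring R] (σ δ : R → R) (M : Type*) [AddCommGroup M]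
    [Module Rᵐᵒᵖ M] : Prop :=
  ∀ (m : ℕ →₀ M) (f : ℕ →₀ R), skewSMul σ δ m f = 0 →
    ∀ r : R, skewSMul σ δ m (skewMul σ δ (Finsupp.single 0 r) f) = 0

section SkewMcCoy

variable {R : Type*} [Ring R] {M : Type*} [AddCommGroup M] [Module Rᵐᵒᵖ M] {σ δ : R → R}

@[simp] theorem fw_succ_zero (i : ℕ) (a : R) : fw σ δ (i + 1) 0 a = 0 := rfl

@[simp] theorem fw_zero_succ (j : ℕ) (a : R) : fw σ δ 0 (j + 1) a = δ (fw σ δ 0 j a) := rfl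

@[simp] theorem fw_succ_succ (i j : ℕ) (a : R) :
    fw σ δ (i + 1) (j + 1) a = σ (fw σ δ i j a) + δ (fw σ δ (i + 1) j a) := rfl

theorem fw_of_lt (hσ0 : σ 0 = 0) (hδ0 : δ 0 = 0) {i j : ℕ} (a : R) (h : j < i) :
    fw σ δ i j a = 0 := by
  induction j generalizing i with
  | zero => obtain ⟨i, rfl⟩ := Nat.exists_eq_succ_of_ne_zero h.ne_bot; rfl
  | succ j ih =>
    obtain ⟨i, rfl⟩ := Nat.exists_eq_succ_of_ne_zero (Nat.ne_zero_of_lt h)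
    rw [fw_succ_succ, ih (by omega), ih (by omega), hσ0, hδ0, add_zero]

theorem fw_self (hσ0 : σ 0 = 0) (hδ0 : δ 0 = 0) (k : ℕ) (a : R) : fw σ δ k k a = σ^[k] a := by
  induction k with
  | zero => rfl
  | succ k ih =>
    rw [fw_succ_succ, ih, fw_of_lt hσ0 hδ0 a k.lt_succ_self, hδ0, add_zero,
      Function.iterate_succ_apply']

theorem fw_apply_zero (hσ0 : σ 0 = 0) (hδ0 : δ 0 = 0) (i j : ℕ) : fw σ δ i j (0 : R) = 0 := by
  induction j generalizing i with
  | zero => cases i <;> rfl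
  | succ j ih => cases i <;> simp only [fw_zero_succ, fw_succ_succ, ih, hσ0, hδ0, add_zero]

theorem SigmaCompatible.smul_iterate_eq_zero_iff (hσ : SigmaCompatible σ M) (k : ℕ) (a : R)
    (x : M) : op (σ^[k] a) • x = 0 ↔ op a • x = 0 := by
  induction k generalizing a with
  | zero => rfl
  | succ k ih => rw [Function.iterate_succ_apply, ih, hσ x a]

theorem smul_fw_eq_zero (hσ : SigmaCompatible σ M) (hδ : DeltaCompatible δ M) {a : R} {x : M}
    (h : op a • x = 0) (i j : ℕ) : op (fw σ δ i j a) • x = 0 := by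
  induction j generalizing i with
  | zero => cases i with
    | zero => exact h
    | succ i => rw [fw_succ_zero, op_zero, zero_smul]
  | succ j ih => cases i with
    | zero => exact hδ x _ (ih 0)
    | succ i =>
      rw [fw_succ_succ, op_add, add_smul, (hσ x _).mp (ih i), hδ x _ (ih (i + 1)), add_zero]

theorem skewMul_single_zero_apply (r : R) (g : ℕ →₀ R) (l : ℕ) :
    skewMul σ δ (Finsupp.single 0 r) g l = r * g l := by
  classical
  rw [skewMul, Finsupp.sum_single_index (by simp)]
  simp only [zero_add, Finset.range_one, Finset.sum_singleton, Finsupp.sum_apply,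
    Finsupp.single_apply, Finsupp.sum_ite_eq']
  split_ifs with hl
  · rfl
  · rw [Finsupp.notMem_support_iff.mp hl, mul_zero]

theorem skewSMul_apply (m : ℕ →₀ M) (h : ℕ →₀ R) (n : ℕ) :
    skewSMul σ δ m h n = m.sum fun j x => h.sum fun l c =>
      ∑ i ∈ Finset.range (j + 1), if i + l = n then op (fw σ δ i j c) • x else 0 := by
  classical
  simp only [skewSMul, Finsupp.sum_apply, Finset.sum_apply', Finsupp.single_apply]

theorem skewSMul_eq_zero_of_forall_smul_eq_zero (hσ : SigmaCompatible σ M)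
    (hδ : DeltaCompatible δ M) {m : ℕ →₀ M} {h : ℕ →₀ R} (hmh : ∀ j l, op (h l) • m j = 0) :
    skewSMul σ δ m h = 0 :=
  Finset.sum_eq_zero fun j _ => Finset.sum_eq_zero fun l _ => Finset.sum_eq_zero fun i _ => by
    rw [smul_fw_eq_zero hσ hδ (hmh j l), Finsupp.single_zero]

theorem skewSMul_apply_add_eq_smul (hσ0 : σ 0 = 0) (hδ0 : δ 0 = 0) (hσ : SigmaCompatible σ M)
    (hδ : DeltaCompatible δ M) {m : ℕ →₀ M} {h : ℕ →₀ R} {j p : ℕ}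
    (hdeg : ∀ l, p < l → h l = 0) (hann : ∀ j', j < j' → ∀ l, op (h l) • m j' = 0) :
    skewSMul σ δ m h (j + p) = op (σ^[j] (h p)) • m j := by
  have hle : ∀ l, h l ≠ 0 → l ≤ p := fun l hl => not_lt.mp (mt (hdeg l) hl)
  rw [skewSMul_apply, Finsupp.sum_eq_single j, Finsupp.sum_eq_single p]
  · simp only [add_left_inj, Finset.sum_ite_eq', Finset.mem_range, lt_add_one, if_true,
      fw_self hσ0 hδ0]
  · intro l hl hlp
    refine Finset.sum_eq_zero fun i hi => if_neg ?_
    have := hle l hl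
    have := Finset.mem_range.mp hi
    omega
  · intro hp
    refine Finset.sum_eq_zero fun i _ => ?_
    rw [fw_apply_zero hσ0 hδ0, op_zero, zero_smul, ite_self]
  · intro j' _ hj'
    refine Finset.sum_eq_zero fun l hl => Finset.sum_eq_zero fun i hi => ?_
    rcases hj'.lt_or_gt with hlt | hgt
    · have := hle l (Finsupp.mem_support_iff.mp hl)
      have := Finset.mem_range.mp hi
      exact if_neg (by omega)
    · exact ite_eq_right_iff.mpr fun _ => smul_fw_eq_zero hσ hδ (hann j' hgt l) i j'
  · intro _
    simp only [smul_zero, ite_self, Finsupp.sum, Finset.sum_const_zero]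

theorem smul_mul_apply_eq_zero_of_skewSMul_eq_zero (hσ0 : σ 0 = 0) (hδ0 : δ 0 = 0)
    (hσ : SigmaCompatible σ M) (hδ : DeltaCompatible δ M) {m : ℕ →₀ M} {g : ℕ →₀ R} {p j : ℕ}
    {r : R} (hmg : skewSMul σ δ m (skewMul σ δ (Finsupp.single 0 r) g) = 0)
    (hdeg : ∀ l, p < l → g l = 0) (hann : ∀ j', j < j' → ∀ l, op (r * g l) • m j' = 0) :
    op (r * g p) • m j = 0 := by
  have hcoeff := skewSMul_apply_add_eq_smul hσ0 hδ0 hσ hδ (m := m)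
    (h := skewMul σ δ (Finsupp.single 0 r) g) (j := j)
    (fun l hl => by rw [skewMul_single_zero_apply, hdeg l hl, mul_zero])
    (by simpa only [skewMul_single_zero_apply] using hann)
  rw [hmg, Finsupp.coe_zero, Pi.zero_apply, skewMul_single_zero_apply] at hcoeff
  exact (hσ.smul_iterate_eq_zero_iff j _ _).mp hcoeff.symm

theorem smul_mul_pow_apply_eq_zero (hσ0 : σ 0 = 0) (hδ0 : δ 0 = 0) (hσ : SigmaCompatible σ M)
    (hδ : DeltaCompatible δ M) {m : ℕ →₀ M} {g : ℕ →₀ R} {p n : ℕ}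
    (hmg : ∀ r, skewSMul σ δ m (skewMul σ δ (Finsupp.single 0 r) g) = 0)
    (hdeg : ∀ l, p < l → g l = 0) (hm : ∀ j, n ≤ j → m j = 0) (t : ℕ) :
    ∀ j, n ≤ j + t → ∀ r, op (r * g p ^ t) • m j = 0 := by
  induction t with
  | zero => intro j hj r; rw [hm j (by omega), smul_zero]
  | succ t ih =>
    intro j hj r
    rw [pow_succ, ← mul_assoc]
    refine smul_mul_apply_eq_zero_of_skewSMul_eq_zero hσ0 hδ0 hσ hδ (hmg _) hdeg ?_
    intro j' hj' l
    rw [op_mul, mul_smul, ih j' (by omega), smul_zero]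

end SkewMcCoy

theorem compatible_star_isSkewMcCoy_general {R : Type*} [Ring R] [IsReduced R]
    (σ : R →+* R) (δ : R → R)
    (hδadd : ∀ a b : R, δ (a + b) = δ a + δ b)
    (M : Type*) [AddCommGroup M] [Module Rᵐᵒᵖ M]
    (hσ : SigmaCompatible ⇑σ M) (hδc : DeltaCompatible δ M)
    (hstar : StarCondition ⇑σ δ M) :
    IsSkewMcCoy ⇑σ δ M := by
  intro m g hg hmg
  have hδ0 : δ 0 = 0 := by simpa using hδadd 0 0
  obtain ⟨p, hp, hpmax⟩ := g.support.exists_max_image id (Finsupp.support_nonempty_iff.mpr hg)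
  have hdeg : ∀ l, p < l → g l = 0 := fun l hl =>
    Finsupp.notMem_support_iff.mp fun hmem => (hpmax l hmem).not_gt hl
  obtain ⟨n, hm⟩ : ∃ n, ∀ j, n ≤ j → m j = 0 :=
    ⟨m.support.sup id + 1, fun j hj => Finsupp.notMem_support_iff.mp fun hmem => by
      have : j ≤ m.support.sup id := Finset.le_sup (f := id) hmem
      omega⟩
  refine ⟨g p ^ n, pow_ne_zero n (Finsupp.mem_support_iff.mp hp), ?_⟩
  refine skewSMul_eq_zero_of_forall_smul_eq_zero hσ hδc fun j l => ?_
  rw [Finsupp.single_apply]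
  split_ifs
  · simpa using smul_mul_pow_apply_eq_zero (map_zero σ) hδ0 hσ hδc (hstar m g hmg) hdeg hm n j
      (by omega) 1
  · rw [op_zero, zero_smul]

/-- Let `M_R` be an `(σ,δ)`-compatible module over a reduced ring `R`. If `M_R` satisfies
condition `(*)`, then it is `(σ,δ)`-skew McCoy. -/
theorem compatible_star_isSkewMcCoy {R : Type*} [Ring R] [IsReduced R]
    (σ : R →+* R) (δ : R → R)
    (hδadd : ∀ a b : R, δ (a + b) = δ a + δ b)
    (hδmul : ∀ a b : R, δ (a * b) = σ a * δ b + δ a * b)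
    (M : Type*) [AddCommGroup M] [Module Rᵐᵒᵖ M]
    (hσ : SigmaCompatible ⇑σ M) (hδc : DeltaCompatible δ M)
    (hstar : StarCondition ⇑σ δ M) :
    IsSkewMcCoy ⇑σ δ M :=
  compatible_star_isSkewMcCoy_general σ δ hδadd M hσ hδc hstar
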